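/- Asymptotics of the infimal coercivity function: the function Υ(u) := inf_{λ ∈ [0,1)} [ ((1 − λ)/2)·u² + H_λ(u + 1/2) + H_λ(1/2 − u) ] satisfies Υ(u)/(u·log u) → 1 as u → +∞. -/

import Mathlib

/-- The regularized entropy `H_λ` (for `λ ∈ [0,1)`). -/
noncomputable def Hlam (lam c : ℝ) : ℝ :=
  if c ≤ (1 - lam) / 2 then c * Real.log ((1 - lam) / (1 + lam)) + lam
  else if c ≤ (1 + lam) / 2 then c * Real.log (2 * c / (1 + lam)) - c + (1 + lam) / 2
  else 0

/-- The infimal coercivity function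
`Υ(u) = inf_{λ ∈ [0,1)} [ ((1-λ)/2) u² + H_λ(u + 1/2) + H_λ(1/2 - u) ]`. -/
noncomputable def Ups (u : ℝ) : ℝ :=
  ⨅ lam : Set.Ico (0:ℝ) 1,
    ((1 - (lam : ℝ)) / 2 * u ^ 2 + Hlam lam (u + 1/2) + Hlam lam (1/2 - u))

/-!
For `u ≥ 1/2` the point `u + 1/2` lies where `H_λ` vanishes and `1/2 - u` on its linear branch,
so with `t = 1 - λ` the objective is `t u²/2 + (u - 1/2) log((1 + λ)/t) + λ`.
The tangent-line bound `log (t u / 2) ≤ t u / 2 - 1` shows that it is at least `(u - 1/2) log u`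
for every `λ`, while `λ = 1 - 2/u` gives at most `u log u + u + 1`.
Hence `Υ(u) = u log u + O(u)`, and `u = o(u log u)`.
-/

open Real Filter Topology Asymptotics

lemma Hlam_of_le {lam c : ℝ} (hc : c ≤ (1 - lam) / 2) :
    Hlam lam c = c * log ((1 - lam) / (1 + lam)) + lam := by
  rw [Hlam, if_pos hc]

lemma Hlam_of_gt {lam c : ℝ} (hlam : 0 ≤ lam) (hc : (1 + lam) / 2 < c) : Hlam lam c = 0 := by
  rw [Hlam, if_neg (by linarith), if_neg hc.not_ge]

lemma Ups_objective_eq {lam u : ℝ} (hlam : lam ∈ Set.Ico (0:ℝ) 1) (hu : 1 / 2 ≤ u) :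
    (1 - lam) / 2 * u ^ 2 + Hlam lam (u + 1/2) + Hlam lam (1/2 - u)
      = (1 - lam) / 2 * u ^ 2 + (u - 1/2) * log ((1 + lam) / (1 - lam)) + lam := by
  obtain ⟨hlam0, hlam1⟩ := hlam
  rw [Hlam_of_gt hlam0 (by linarith), Hlam_of_le (by linarith),
    ← inv_div (1 - lam), log_inv]
  ring

lemma mul_log_le_Ups_objective {lam u : ℝ} (hlam : lam ∈ Set.Ico (0:ℝ) 1) (hu : 1 / 2 ≤ u) :
    (u - 1/2) * log u
      ≤ (1 - lam) / 2 * u ^ 2 + (u - 1/2) * log ((1 + lam) / (1 - lam)) + lam := by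
  obtain ⟨hlam0, hlam1⟩ := hlam
  have ht : 0 < 1 - lam := by linarith
  have hu0 : 0 < u := by linarith
  have ha : 0 ≤ u - 1/2 := by linarith
  have htangent : log (1 - lam) + log u - log 2 ≤ (1 - lam) * u / 2 - 1 := by
    rw [← log_mul ht.ne' hu0.ne', ← log_div (by positivity) two_ne_zero]
    exact log_le_sub_one_of_pos (by positivity)
  have hlog_num : 0 ≤ log (1 + lam) := log_nonneg (by linarith)
  rw [log_div (by linarith) ht.ne']
  nlinarith [mul_le_mul_of_nonneg_left htangent ha, mul_nonneg ha hlog_num,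
    mul_nonneg ha (sub_nonneg.2 log_two_lt_d9.le), mul_nonneg ht.le hu0.le]

lemma mul_log_sub_le_Ups {u : ℝ} (hu : 1 / 2 ≤ u) : u * log u - u ≤ Ups u := by
  have hlog : log u ≤ u := (log_le_sub_one_of_pos (by linarith)).trans (by linarith)
  refine le_ciInf fun ⟨lam, hlam⟩ => ?_
  rw [Ups_objective_eq hlam hu]
  linarith [mul_log_le_Ups_objective hlam hu]

lemma Ups_le_mul_log_add {u : ℝ} (hu : 2 ≤ u) : Ups u ≤ u * log u + u + 1 := by
  have hu0 : 0 < u := by linarith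
  have hmem : 1 - 2 / u ∈ Set.Ico (0:ℝ) 1 :=
    ⟨by rw [sub_nonneg, div_le_one hu0]; exact hu, by linarith [div_pos two_pos hu0]⟩
  have hbdd : BddBelow (Set.range fun lam : Set.Ico (0:ℝ) 1 =>
      (1 - (lam : ℝ)) / 2 * u ^ 2 + Hlam lam (u + 1/2) + Hlam lam (1/2 - u)) := by
    refine ⟨u * log u - u, ?_⟩
    rintro _ ⟨⟨lam, hlam⟩, rfl⟩
    dsimp only
    rw [Ups_objective_eq hlam (by linarith)]
    linarith [mul_log_le_Ups_objective hlam (by linarith : (1:ℝ) / 2 ≤ u),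
      log_le_sub_one_of_pos hu0]
  have hratio : (1 + (1 - 2 / u)) / (1 - (1 - 2 / u)) = u - 1 := by
    field_simp
    ring
  have hlog : (u - 1/2) * log (u - 1) ≤ u * log u := by
    have h1 : 0 ≤ log (u - 1) := log_nonneg (by linarith)
    have h2 : log (u - 1) ≤ log u := log_le_log (by linarith) (by linarith)
    nlinarith
  calc Ups u ≤ _ := ciInf_le hbdd ⟨1 - 2 / u, hmem⟩
    _ = u + (u - 1/2) * log (u - 1) + (1 - 2 / u) := by
      rw [Ups_objective_eq hmem (by linarith), hratio]
      field_simp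
      ring
    _ ≤ u * log u + u + 1 := by linarith [div_pos two_pos hu0]

lemma isLittleO_self_mul_log : (fun u : ℝ => u) =o[atTop] fun u => u * log u := by
  simpa only [mul_one] using
    (isBigO_refl (fun u : ℝ => u) atTop).mul_isLittleO (isLittleO_const_log_atTop (c := 1))

lemma tendsto_div_mul_log_of_sub_isBigO {f : ℝ → ℝ}
    (h : (fun u => f u - u * log u) =O[atTop] fun u => u) :
    Tendsto (fun u => f u / (u * log u)) atTop (𝓝 1) := by
  have hequiv : f ~[atTop] fun u => u * log u := h.trans_isLittleO isLittleO_self_mul_log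
  have hne : ∀ᶠ u in atTop, u * log u ≠ 0 := by
    filter_upwards [eventually_gt_atTop 1] with u hu
    exact mul_ne_zero (by linarith) (log_pos hu).ne'
  exact (isEquivalent_iff_tendsto_one hne).1 hequiv

/-- Asymptotics of the infimal coercivity function: `Υ(u) ∼ u log u` as `u → +∞`. -/
theorem Ups_asymptotics :
    Filter.Tendsto (fun u => Ups u / (u * Real.log u)) Filter.atTop (nhds 1) := by
  refine tendsto_div_mul_log_of_sub_isBigO (IsBigO.of_bound 2 ?_)
  filter_upwards [eventually_ge_atTop 2] with u hu
  rw [Real.norm_eq_abs, Real.norm_eq_abs, abs_of_pos (by linarith : (0:ℝ) < u), abs_le]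
  constructor
  · linarith [mul_log_sub_le_Ups (by linarith : (1:ℝ) / 2 ≤ u)]
  · linarith [Ups_le_mul_log_add hu]
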